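/- Let τ' = (1/n) ∑_{k=1}^{n} ρ^{⊗(k-1)} ⊗ μ_{n-k} ⊗ |k⟩⟨k| and η^{ii} = (1/n) ∑_{k=1}^{n} ρ^{⊗(k-1)} ⊗ μ_{n+1-k} ⊗ |k⟩⟨k|, where μ_i is the reduced state of μ on the first i system copies together with C (with μ_n = μ, μ_0 = τ_n). If Tr_{S^{⊗n}} μ = τ_n, then tracing out the last system factor S_n from η^{ii} returns exactly τ', i.e., the catalyst is preserved. -/
import Mathlib


open Matrix
open scoped ComplexOrder

variable {s c : Type*} [Fintype s] [Fintype c] [DecidableEq s] [DecidableEq c]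

/-- The reduced state `μ_m` of a state `μ` on `S^{⊗(n+1)} ⊗ C`, obtained by tracing out the
system copies `S_{m+1}, …, S_{n+1}` (keeping the first `m` copies and `C`). -/
noncomputable def red (n : ℕ)
    (μ : Matrix ((Fin (n + 1) → s) × c) ((Fin (n + 1) → s) × c) ℂ)
    (m : ℕ) (h : m ≤ n + 1) : Matrix ((Fin m → s) × c) ((Fin m → s) × c) ℂ :=
  Matrix.of fun p q => ∑ g : Fin (n + 1 - m) → s,
    μ ((fun i => if hi : (i : ℕ) < m then p.1 ⟨i, hi⟩
          else g ⟨(i : ℕ) - m, by have := i.isLt; omega⟩), p.2)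
      ((fun i => if hi : (i : ℕ) < m then q.1 ⟨i, hi⟩
          else g ⟨(i : ℕ) - m, by have := i.isLt; omega⟩), q.2)

/-- The catalyst state `τ' = (1/(n+1)) ∑_{k=1}^{n+1} ρ^{⊗(k-1)} ⊗ μ_{n+1-k} ⊗ |k⟩⟨k|`,
a state on `S^{⊗ n} ⊗ C ⊗ K` (the flag `a : Fin (n+1)` encodes `k = a + 1`). -/
noncomputable def tauPrime (n : ℕ) (ρ : Matrix s s ℂ)
    (μ : Matrix ((Fin (n + 1) → s) × c) ((Fin (n + 1) → s) × c) ℂ) :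
    Matrix (((Fin n → s) × c) × Fin (n + 1)) (((Fin n → s) × c) × Fin (n + 1)) ℂ :=
  Matrix.of fun P Q =>
    if P.2 = Q.2 then
      ((n : ℂ) + 1)⁻¹ *
        (∏ i : Fin n, if (i : ℕ) < (P.2 : ℕ) then ρ (P.1.1 i) (Q.1.1 i) else 1) *
        red n μ (n - (P.2 : ℕ)) (by omega)
          ((fun j : Fin (n - (P.2 : ℕ)) =>
              P.1.1 ⟨(P.2 : ℕ) + j, by have := j.isLt; have := P.2.isLt; omega⟩), P.1.2)
          ((fun j : Fin (n - (P.2 : ℕ)) =>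
              Q.1.1 ⟨(P.2 : ℕ) + j, by have := j.isLt; have := P.2.isLt; omega⟩), Q.1.2)
    else 0

/-- The state `η^{ii} = (1/(n+1)) ∑_{k=1}^{n+1} ρ^{⊗(k-1)} ⊗ μ_{n+2-k} ⊗ |k⟩⟨k|`, on
`S^{⊗(n+1)} ⊗ C ⊗ K`. -/
noncomputable def etaTwo (n : ℕ) (ρ : Matrix s s ℂ)
    (μ : Matrix ((Fin (n + 1) → s) × c) ((Fin (n + 1) → s) × c) ℂ) :
    Matrix (((Fin (n + 1) → s) × c) × Fin (n + 1))
      (((Fin (n + 1) → s) × c) × Fin (n + 1)) ℂ :=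
  Matrix.of fun P Q =>
    if P.2 = Q.2 then
      ((n : ℂ) + 1)⁻¹ *
        (∏ i : Fin (n + 1), if (i : ℕ) < (P.2 : ℕ) then ρ (P.1.1 i) (Q.1.1 i) else 1) *
        red n μ (n + 1 - (P.2 : ℕ)) (by omega)
          ((fun j : Fin (n + 1 - (P.2 : ℕ)) =>
              P.1.1 ⟨(P.2 : ℕ) + j, by have := j.isLt; omega⟩), P.1.2)
          ((fun j : Fin (n + 1 - (P.2 : ℕ)) =>
              Q.1.1 ⟨(P.2 : ℕ) + j, by have := j.isLt; omega⟩), Q.1.2)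
    else 0

/-- Partial trace over the last system copy `S_{n+1}`. -/
noncomputable def trLast (n : ℕ)
    (M : Matrix (((Fin (n + 1) → s) × c) × Fin (n + 1))
      (((Fin (n + 1) → s) × c) × Fin (n + 1)) ℂ) :
    Matrix (((Fin n → s) × c) × Fin (n + 1)) (((Fin n → s) × c) × Fin (n + 1)) ℂ :=
  Matrix.of fun P Q => ∑ t : s,
    M ((Fin.snoc P.1.1 t, P.1.2), P.2) ((Fin.snoc Q.1.1 t, Q.1.2), Q.2)


private lemma snoc_apply' {m : ℕ} (p : Fin m → s) (t : s) (i : Fin (m + 1)) :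
    (Fin.snoc p t : Fin (m + 1) → s) i = if h : (i : ℕ) < m then p ⟨i, h⟩ else t := by
  rcases i with ⟨i, hi⟩
  by_cases h : i < m
  · simp only [Fin.snoc, h, dif_pos, Fin.castLT]
    rfl
  · simp [Fin.snoc, h]

private lemma sum_red_succ (n a : ℕ) (ha : a ≤ n)
    (μ : Matrix ((Fin (n + 1) → s) × c) ((Fin (n + 1) → s) × c) ℂ)
    (p q : Fin n → s) (x y : c) :
    ∑ t : s, red n μ (n + 1 - a) (by omega)
        ((fun j : Fin (n + 1 - a) =>
            if hj : a + (j : ℕ) < n then p ⟨a + j, hj⟩ else t), x)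
        ((fun j : Fin (n + 1 - a) =>
            if hj : a + (j : ℕ) < n then q ⟨a + j, hj⟩ else t), y)
      = red n μ (n - a) (by omega)
        ((fun j : Fin (n - a) => p ⟨a + j, by have := j.isLt; omega⟩), x)
        ((fun j : Fin (n - a) => q ⟨a + j, by have := j.isLt; omega⟩), y) := by
  unfold red
  simp only [Matrix.of_apply]
  rw [← Fintype.sum_prod_type']
  symm
  refine Fintype.sum_bijective
    (fun (g' : Fin (n + 1 - (n - a)) → s) =>
      ((g' ⟨0, by omega⟩,
        fun j : Fin (n + 1 - (n + 1 - a)) => g' ⟨(j : ℕ) + 1, by have := j.isLt; omega⟩) :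
        s × (Fin (n + 1 - (n + 1 - a)) → s)))
    (Function.bijective_iff_has_inverse.mpr
      ⟨fun tg i => if h : (i : ℕ) = 0 then tg.1
          else tg.2 ⟨(i : ℕ) - 1, by have := i.isLt; omega⟩, ?_, ?_⟩)
    _ _ (fun g' => ?_)
  · intro g'
    funext i
    dsimp only
    by_cases h : (i : ℕ) = 0
    · rw [dif_pos h]
      exact congrArg g' (Fin.ext h.symm)
    · rw [dif_neg h]
      exact congrArg g' (Fin.ext (by simp only [Fin.val_mk]; omega))
  · intro tg
    refine Prod.ext ?_ ?_
    · dsimp only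
      rw [dif_pos rfl]
    · funext j
      dsimp only
      rw [dif_neg (by omega)]
      exact congrArg tg.2 (Fin.ext (by simp))
  · dsimp only
    have hfun : ∀ (r : Fin n → s),
        (fun i : Fin (n + 1) => if hi : (i : ℕ) < n - a then
            r ⟨a + (i : ℕ), by omega⟩
          else g' ⟨(i : ℕ) - (n - a), by have := i.isLt; omega⟩)
        = (fun i : Fin (n + 1) => if hi : (i : ℕ) < n + 1 - a then
            (if hj : a + (i : ℕ) < n then r ⟨a + (i : ℕ), hj⟩
              else g' ⟨0, by omega⟩)
          else g' ⟨((i : ℕ) - (n + 1 - a)) + 1, by have := i.isLt; omega⟩) := by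
      intro r
      funext i
      by_cases h1 : (i : ℕ) < n - a
      · rw [dif_pos h1, dif_pos (by omega), dif_pos (by omega)]
      · by_cases h2 : (i : ℕ) < n + 1 - a
        · rw [dif_neg h1, dif_pos h2, dif_neg (by omega)]
          exact congrArg g' (Fin.ext (by simp; omega))
        · rw [dif_neg h1, dif_neg h2]
          exact congrArg g' (Fin.ext (by simp; omega))
    -- goal: μ (F' g', x) (G' g', y) = μ (B1, x) (B2, y)
    congr 1
    · exact congrArg (fun f => (f, x)) (by rw [hfun p])
    · exact congrArg (fun f => (f, y)) (by rw [hfun q])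

/-- Catalyst preservation in the asymptotic-catalysis construction: if
`Tr_{S^{⊗(n+1)}} μ = τ_{n+1}`, then tracing the last system copy out of `η^{ii}` returns
exactly the catalyst `τ'`. -/
theorem trLast_etaTwo_eq_tauPrime (n : ℕ) (ρ : Matrix s s ℂ) (τc : Matrix c c ℂ)
    (μ : Matrix ((Fin (n + 1) → s) × c) ((Fin (n + 1) → s) × c) ℂ)
    (hρ : ρ.PosSemidef) (hρ1 : ρ.trace = 1)
    (hτ : ∀ (x y : c) (p q : Fin 0 → s),
      red n μ 0 (by omega) (p, x) (q, y) = τc x y) :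
    trLast n (etaTwo n ρ μ) = tauPrime n ρ μ := by
  ext P Q
  have hP2 : (P.2 : ℕ) ≤ n := Fin.is_le P.2
  have hn : ¬ (n < (P.2 : ℕ)) := by omega
  simp only [trLast, etaTwo, tauPrime, Matrix.of_apply]
  by_cases hPQ : P.2 = Q.2
  · simp only [if_pos hPQ, snoc_apply', Fin.prod_univ_castSucc, Fin.coe_castSucc,
      Fin.val_last, Fin.val_mk, Fin.is_lt, dif_pos, if_neg hn, mul_one, Fin.eta]
    simp only [mul_assoc]
    rw [← Finset.mul_sum, ← Finset.mul_sum,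
      sum_red_succ n (P.2 : ℕ) hP2 μ P.1.1 Q.1.1 P.1.2 Q.1.2]
  · simp [if_neg hPQ]
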